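/- arXiv:2504.18119 — 2 statements merged into one kernel-verified Lean document; each statement's English description precedes it below -/
import Mathlib

section
/- If L is a Galois number field with no real embeddings, π ∈ L^×, q > 1 is rational and ν₁ ∈ ℤ are such that |τ(π)|² = q^{ν₁} for every embedding τ : L → ℂ, then π·ι(π) = q^{ν₁} as elements of L, and for every σ ∈ Gal(L/ℚ) one has (σισ⁻¹)(π) = ι(π), where ι denotes the complex conjugation on L induced by a fixed embedding L ↪ ℂ. In particular π lies in the subfield of L on which all conjugates of ι agree (the maximal CM subfield). -/
/-- If `L` is a Galois number field with no real embeddings, `π ∈ L^×`, `q > 1` rational and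
`ν₁ ∈ ℤ` are such that `|τ(π)|² = q^ν₁` for every embedding `τ : L → ℂ`, then
`π·ι(π) = q^ν₁` in `L`, and every conjugate `σισ⁻¹` of the complex conjugation `ι` agrees
with `ι` on `π`. -/
theorem weil_number_conjugation (L : Type*) [Field L] [NumberField L] [IsGalois ℚ L]
    (τ₀ : L →+* ℂ)
    (hTI : ∀ τ : L →+* ℂ, (starRingEnd ℂ).comp τ ≠ τ)
    (ι : L ≃ₐ[ℚ] L) (hι : ∀ x : L, τ₀ (ι x) = starRingEnd ℂ (τ₀ x))
    (π : Lˣ) (q : ℚ) (hq : 1 < q) (ν₁ : ℤ)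
    (h : ∀ τ : L →+* ℂ, (‖τ (π : L)‖) ^ 2 = (q : ℝ) ^ ν₁) :
    (π : L) * ι (π : L) = (q : L) ^ ν₁ ∧
      ∀ σ : L ≃ₐ[ℚ] L, (σ * ι * σ⁻¹) (π : L) = ι (π : L) := by
  have main : ∀ σ : L ≃ₐ[ℚ] L, σ (π : L) * ι (σ (π : L)) = (q : L) ^ ν₁ := by
    intro σ
    apply τ₀.injective
    have hτ : ‖τ₀ (σ (π : L))‖ ^ 2 = (q : ℝ) ^ ν₁ :=
      h (τ₀.comp σ.toAlgHom.toRingHom)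
    rw [map_mul, hι, Complex.mul_conj, map_zpow₀, map_ratCast, ← Complex.sq_norm, hτ]
    push_cast
    ring
  have h1 : (π : L) * ι (π : L) = (q : L) ^ ν₁ := by
    have := main 1
    simpa using this
  refine ⟨h1, fun σ => ?_⟩
  have h2 := congrArg σ (main σ⁻¹)
  rw [map_mul] at h2
  have hfix : σ ((q : L) ^ ν₁) = (q : L) ^ ν₁ := by
    rw [map_zpow₀]
    norm_cast
    simp [AlgEquiv.commutes]
  have hinv : σ (σ⁻¹ (π : L)) = (π : L) := by
    exact σ.apply_symm_apply _
  rw [hfix, hinv] at h2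
  show σ (ι (σ⁻¹ (π : L))) = ι (π : L)
  apply mul_left_cancel₀ (show (π : L) ≠ 0 from π.ne_zero)
  rw [h2, h1]
end

section
/- Let F be an algebraically closed field and δ = (δ₁, …, δ_n) ∈ (F^×)^n. If the only tuple (m₁, …, m_n) ∈ ℤ^n with δ₁^{m₁}⋯δ_n^{m_n} = 1 is the zero tuple, then the subgroup {δ^k : k ∈ ℤ} is Zariski dense in the torus 𝔾_m^n over F. -/
/-- Zariski density of a multiplicatively independent point's powers in the torus `𝔾_m^n`:
if the coordinates `δ i ∈ F^×` (over an algebraically closed field `F`) admit no nontrivial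
multiplicative relation, then every polynomial vanishing on all integer powers `δ^k`
vanishes at every point of `(F^×)^n`. -/
theorem zariski_density_of_multiplicatively_independent
    (F : Type*) [Field F] [IsAlgClosed F] (n : ℕ) (δ : Fin n → Fˣ)
    (h : ∀ m : Fin n → ℤ, (∏ i, δ i ^ m i) = 1 → m = 0)
    (f : MvPolynomial (Fin n) F)
    (hf : ∀ k : ℤ, MvPolynomial.eval (fun i => ((δ i ^ k : Fˣ) : F)) f = 0) :
    ∀ x : Fin n → Fˣ, MvPolynomial.eval (fun i => ((x i : Fˣ) : F)) f = 0 := by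
  -- the "character" associated to a monomial exponent `d`
  set u : (Fin n →₀ ℕ) → Fˣ := fun d => ∏ i, δ i ^ (d i) with hu
  have hu_inj : Function.Injective u := by
    intro a b hab
    have key : (∏ i, δ i ^ ((a i : ℤ) - (b i : ℤ))) = 1 := by
      have : ∀ i, δ i ^ ((a i : ℤ) - (b i : ℤ)) = δ i ^ (a i) * (δ i ^ (b i))⁻¹ := by
        intro i
        rw [zpow_sub, zpow_natCast, zpow_natCast]
      rw [Finset.prod_congr rfl fun i _ => this i, Finset.prod_mul_distrib,
        Finset.prod_inv_distrib]
      have : (∏ i, δ i ^ (a i)) = ∏ i, δ i ^ (b i) := hab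
      rw [this, mul_inv_cancel]
    have := h _ key
    have hab' : ∀ i, (a i : ℤ) = (b i : ℤ) := by
      intro i
      have := congrFun this i
      simpa [sub_eq_zero] using this
    ext i
    exact_mod_cast hab' i
  -- monoid homomorphisms `Multiplicative ℤ →* F`
  set φ : (Fin n →₀ ℕ) → (Multiplicative ℤ →* F) :=
    fun d => (Units.coeHom F).comp (zpowersHom Fˣ (u d)) with hφ
  have hφ_inj : Function.Injective φ := by
    intro a b hab
    apply hu_inj
    have := congrFun (congrArg (fun g : Multiplicative ℤ →* F => (g : Multiplicative ℤ → F)) hab)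
      (Multiplicative.ofAdd 1)
    simp only [hφ, MonoidHom.coe_comp, Function.comp_apply, zpowersHom_apply,
      toAdd_ofAdd, zpow_one, Units.coeHom_apply] at this
    exact Units.ext this
  have hLI : LinearIndependent F (fun d : (Fin n →₀ ℕ) => (φ d : Multiplicative ℤ → F)) :=
    (linearIndependent_monoidHom (Multiplicative ℤ) F).comp φ hφ_inj
  -- the vanishing hypothesis gives a vanishing linear combination of characters
  have hsum : (∑ d ∈ f.support, MvPolynomial.coeff d f • (φ d : Multiplicative ℤ → F)) = 0 := by
    funext k
    have := hf k.toAdd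
    rw [MvPolynomial.eval_eq'] at this
    simp only [Finset.sum_apply, Pi.zero_apply, Pi.smul_apply, smul_eq_mul]
    rw [← this]
    refine Finset.sum_congr rfl fun d _ => ?_
    congr 1
    simp only [hφ, MonoidHom.coe_comp, Function.comp_apply, zpowersHom_apply,
      Units.coeHom_apply, hu]
    push_cast
    rw [← Finset.prod_zpow]
    refine Finset.prod_congr rfl fun i _ => ?_
    rw [← zpow_natCast ((δ i : F)), ← zpow_mul, mul_comm, zpow_mul, zpow_natCast]
  have hcoeff : ∀ d ∈ f.support, MvPolynomial.coeff d f = 0 :=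
    linearIndependent_iff'.mp hLI f.support _ hsum
  have hf0 : f = 0 := by
    ext d
    by_cases hd : d ∈ f.support
    · exact (hcoeff d hd).trans (MvPolynomial.coeff_zero d).symm
    · simpa using MvPolynomial.notMem_support_iff.mp hd
  intro x
  simp [hf0]
end
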